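/- arXiv:2111.10853 — 5 statements merged into one kernel-verified Lean document; each statement's English description precedes it below -/
import Mathlib

section
/- Consider the linear model Y = βX + θZ + ε where X, Z, ε are square-integrable real random variables, β, θ ∈ ℝ, E[ε | X, Z] = 0, and let σ² = E[ε²], ν(Z) = E[X | Z], γ² = E[(X − ν(Z))²] with γ², σ² > 0. Then the nonparametric partial correlation ρ = E[(Y − μ(Z))(X − ν(Z))] / √(E[(Y − μ(Z))²]·E[(X − ν(Z))²]) equals β γ / √(β²γ² + σ²), where γ = √(γ²) and μ(Z) = E[Y | Z]. In particular ρ → 0 as γ → 0. -/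
/-!
The residual of `Y` given `Z` is `β (X − ν(Z)) + ε`, because `E[ε | Z] = 0` by the tower
property and `θZ` is `Z`-measurable. The residual `X − ν(Z)` is `(X, Z)`-measurable, so it is
orthogonal to `ε` in `L²`. Pythagoras then gives the covariance `β γ²` and the variance
`β² γ² + σ²`, and the ratio simplifies to `β γ / √(β² γ² + σ²)`.
-/

open MeasureTheory

-- No condition on `a`: for `a ≤ 0` both sides vanish since `√a = 0` and `x / 0 = 0`.
lemma mul_div_sqrt_mul_eq (b a g : ℝ) (hg : 0 ≤ g) : b * g / √(a * g) = b * √g / √a := by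
  rw [Real.sqrt_mul' a hg]
  nth_rewrite 1 [← Real.mul_self_sqrt hg]
  rcases eq_or_ne √g 0 with h | h
  · simp [h]
  · rw [← mul_assoc, mul_div_mul_right _ _ h]

section CondExp

variable {Ω : Type*} {m m' m0 : MeasurableSpace Ω} {P : Measure Ω} [IsFiniteMeasure P]

lemma condExp_ae_eq_zero_of_le {f : Ω → ℝ} (hmm' : m ≤ m') (hm' : m' ≤ m0)
    (hf : P[f | m'] =ᵐ[P] 0) : P[f | m] =ᵐ[P] 0 := by
  have h := condExp_congr_ae (m := m) hf
  rw [condExp_zero] at h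
  exact (condExp_condExp_of_le hmm' hm').symm.trans h

lemma integral_mul_eq_zero_of_condExp_ae_eq_zero {g f : Ω → ℝ} (hm : m ≤ m0)
    (hg : StronglyMeasurable[m] g) (hgf : Integrable (g * f) P) (hf : Integrable f P)
    (hf0 : P[f | m] =ᵐ[P] 0) : ∫ ω, g ω * f ω ∂P = 0 := by
  have hpull : P[g * f | m] =ᵐ[P] 0 := by
    filter_upwards [condExp_mul_of_stronglyMeasurable_left hg hgf hf, hf0] with ω hω hω0
    simp [hω, hω0]
  calc ∫ ω, g ω * f ω ∂P = ∫ ω, (P[g * f | m]) ω ∂P := (integral_condExp hm).symm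
    _ = 0 := by simp [integral_congr_ae hpull]

lemma sub_condExp_ae_eq_of_linear {X Z ε Y : Ω → ℝ} {β θ : ℝ} (hm : m ≤ m0)
    (hX : Integrable X P) (hZ : StronglyMeasurable[m] Z) (hZi : Integrable Z P)
    (hε : Integrable ε P) (hε0 : P[ε | m] =ᵐ[P] 0)
    (hY : ∀ ω, Y ω = β * X ω + θ * Z ω + ε ω) :
    (fun ω => Y ω - (P[Y | m]) ω) =ᵐ[P] fun ω => β * (X ω - (P[X | m]) ω) + ε ω := by
  have hβX : P[fun ω => β * X ω | m] =ᵐ[P] fun ω => β * (P[X | m]) ω := condExp_smul β X m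
  have hθZ : P[fun ω => θ * Z ω | m] = fun ω => θ * Z ω :=
    condExp_of_stronglyMeasurable hm (hZ.const_smul θ) (hZi.const_mul θ)
  have hsum : P[Y | m] =ᵐ[P] P[fun ω => β * X ω | m] + P[fun ω => θ * Z ω | m] + P[ε | m] := by
    rw [show Y = (fun ω => β * X ω) + (fun ω => θ * Z ω) + ε from funext hY]
    filter_upwards [condExp_add ((hX.const_mul β).add (hZi.const_mul θ)) hε m,
      condExp_add (hX.const_mul β) (hZi.const_mul θ) m] with ω h₁ h₂
    simp only [Pi.add_apply] at h₁ h₂ ⊢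
    rw [h₁, h₂]
  filter_upwards [hsum, hβX, hε0] with ω hω hωX hωε
  simp only [Pi.add_apply, Pi.zero_apply, hθZ] at hω hωε
  rw [hω, hωX, hωε, hY ω]
  ring

end CondExp

section Orthogonal

variable {Ω : Type*} {m0 : MeasurableSpace Ω} {P : Measure Ω} {g ε : Ω → ℝ}

lemma integral_mul_add_mul_eq_of_orthogonal (β : ℝ) (hg : MemLp g 2 P) (hε : MemLp ε 2 P)
    (horth : ∫ ω, g ω * ε ω ∂P = 0) :
    ∫ ω, (β * g ω + ε ω) * g ω ∂P = β * ∫ ω, g ω ^ 2 ∂P := by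
  have hgε : Integrable (fun ω => g ω * ε ω) P := hg.integrable_mul hε
  calc ∫ ω, (β * g ω + ε ω) * g ω ∂P = ∫ ω, β * g ω ^ 2 + g ω * ε ω ∂P := by
        congr 1; funext ω; ring
    _ = β * ∫ ω, g ω ^ 2 ∂P := by
        rw [integral_add (hg.integrable_sq.const_mul β) hgε, integral_const_mul, horth, add_zero]

lemma integral_mul_add_sq_eq_of_orthogonal (β : ℝ) (hg : MemLp g 2 P) (hε : MemLp ε 2 P)
    (horth : ∫ ω, g ω * ε ω ∂P = 0) :
    ∫ ω, (β * g ω + ε ω) ^ 2 ∂P = β ^ 2 * ∫ ω, g ω ^ 2 ∂P + ∫ ω, ε ω ^ 2 ∂P := by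
  have hgε : Integrable (fun ω => g ω * ε ω) P := hg.integrable_mul hε
  calc ∫ ω, (β * g ω + ε ω) ^ 2 ∂P
        = ∫ ω, β ^ 2 * g ω ^ 2 + 2 * β * (g ω * ε ω) + ε ω ^ 2 ∂P := by
        congr 1; funext ω; ring
    _ = β ^ 2 * ∫ ω, g ω ^ 2 ∂P + ∫ ω, ε ω ^ 2 ∂P := by
        have hg2 : Integrable (fun ω => β ^ 2 * g ω ^ 2) P := hg.integrable_sq.const_mul _
        have hgε' : Integrable (fun ω => 2 * β * (g ω * ε ω)) P := hgε.const_mul _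
        have hsum : Integrable (fun ω => β ^ 2 * g ω ^ 2 + 2 * β * (g ω * ε ω)) P := hg2.add hgε'
        rw [integral_add hsum hε.integrable_sq, integral_add hg2 hgε',
          integral_const_mul, integral_const_mul, horth, mul_zero, add_zero]

end Orthogonal

theorem stmt3_general
    {Ω : Type*} {m0 : MeasurableSpace Ω} (P : Measure Ω) [IsProbabilityMeasure P]
    (X Z ε Y : Ω → ℝ) (β θ : ℝ)
    (hXm : Measurable X) (hZm : Measurable Z)
    (hX2 : MemLp X 2 P) (hZ2 : MemLp Z 2 P) (hε2 : MemLp ε 2 P)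
    (hmodel : ∀ ω, Y ω = β * X ω + θ * Z ω + ε ω)
    (hε : P[ε | MeasurableSpace.comap (fun ω => (X ω, Z ω)) inferInstance] =ᵐ[P] 0)
    (σsq γsq : ℝ)
    (hσ : σsq = ∫ ω, (ε ω) ^ 2 ∂P)
    (hγ : γsq = ∫ ω, (X ω - (P[X | MeasurableSpace.comap Z inferInstance]) ω) ^ 2 ∂P) :
    (∫ ω, (Y ω - (P[Y | MeasurableSpace.comap Z inferInstance]) ω)
        * (X ω - (P[X | MeasurableSpace.comap Z inferInstance]) ω) ∂P)
      / Real.sqrt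
          ((∫ ω, (Y ω - (P[Y | MeasurableSpace.comap Z inferInstance]) ω) ^ 2 ∂P)
            * ∫ ω, (X ω - (P[X | MeasurableSpace.comap Z inferInstance]) ω) ^ 2 ∂P)
      = β * Real.sqrt γsq / Real.sqrt (β ^ 2 * γsq + σsq) := by
  set mZ : MeasurableSpace Ω := MeasurableSpace.comap Z inferInstance
  set mXZ : MeasurableSpace Ω := MeasurableSpace.comap (fun ω => (X ω, Z ω)) inferInstance
  have hmXZ : mXZ ≤ m0 := (hXm.prodMk hZm).comap_le
  have hmZXZ : mZ ≤ mXZ := (measurable_snd.comp (comap_measurable _) : Measurable[mXZ] Z).comap_le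
  have hres := sub_condExp_ae_eq_of_linear hZm.comap_le (hX2.integrable one_le_two)
    (comap_measurable Z).stronglyMeasurable (hZ2.integrable one_le_two)
    (hε2.integrable one_le_two) (condExp_ae_eq_zero_of_le hmZXZ hmXZ hε) hmodel
  set g : Ω → ℝ := fun ω => X ω - (P[X | mZ]) ω
  have hg2 : MemLp g 2 P := hX2.sub (hX2.condExp one_le_two)
  have hgXZ : StronglyMeasurable[mXZ] g :=
    (measurable_fst.comp (comap_measurable _)).stronglyMeasurable.sub
      (stronglyMeasurable_condExp.mono hmZXZ)
  have horth : ∫ ω, g ω * ε ω ∂P = 0 := integral_mul_eq_zero_of_condExp_ae_eq_zero hmXZ hgXZ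
    (hg2.integrable_mul hε2) (hε2.integrable one_le_two) hε
  have hcov : ∫ ω, (Y ω - (P[Y | mZ]) ω) * g ω ∂P = β * ∫ ω, g ω ^ 2 ∂P :=
    (integral_congr_ae (hres.mul (Filter.EventuallyEq.refl _ g))).trans
      (integral_mul_add_mul_eq_of_orthogonal β hg2 hε2 horth)
  have hvar : ∫ ω, (Y ω - (P[Y | mZ]) ω) ^ 2 ∂P = β ^ 2 * ∫ ω, g ω ^ 2 ∂P + ∫ ω, ε ω ^ 2 ∂P :=
    (integral_congr_ae (hres.pow_const 2)).trans
      (integral_mul_add_sq_eq_of_orthogonal β hg2 hε2 horth)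
  rw [hcov, hvar, ← hγ, ← hσ]
  exact mul_div_sqrt_mul_eq β _ γsq (hγ ▸ integral_nonneg fun ω => sq_nonneg _)

/-- In the linear model `Y = βX + θZ + ε` with `E[ε | X,Z] = 0`, `σ² = E[ε²]`,
`γ² = E[(X − ν(Z))²] > 0`, `σ² > 0`, the nonparametric partial correlation
`ρ = E[(Y − μ(Z))(X − ν(Z))] / √(E[(Y − μ(Z))²]·E[(X − ν(Z))²])` equals
`βγ / √(β²γ² + σ²)` with `γ = √(γ²)`. -/
theorem stmt3
    {Ω : Type*} {m0 : MeasurableSpace Ω} (P : Measure Ω) [IsProbabilityMeasure P]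
    (X Z ε Y : Ω → ℝ) (β θ : ℝ)
    (hXm : Measurable X) (hZm : Measurable Z)
    (hX2 : MemLp X 2 P) (hZ2 : MemLp Z 2 P) (hε2 : MemLp ε 2 P)
    (hmodel : ∀ ω, Y ω = β * X ω + θ * Z ω + ε ω)
    (hε : P[ε | MeasurableSpace.comap (fun ω => (X ω, Z ω)) inferInstance] =ᵐ[P] 0)
    (σsq γsq : ℝ)
    (hσ : σsq = ∫ ω, (ε ω) ^ 2 ∂P)
    (hγ : γsq = ∫ ω, (X ω - (P[X | MeasurableSpace.comap Z inferInstance]) ω) ^ 2 ∂P)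
    (hγpos : 0 < γsq) (hσpos : 0 < σsq) :
    (∫ ω, (Y ω - (P[Y | MeasurableSpace.comap Z inferInstance]) ω)
        * (X ω - (P[X | MeasurableSpace.comap Z inferInstance]) ω) ∂P)
      / Real.sqrt
          ((∫ ω, (Y ω - (P[Y | MeasurableSpace.comap Z inferInstance]) ω) ^ 2 ∂P)
            * ∫ ω, (X ω - (P[X | MeasurableSpace.comap Z inferInstance]) ω) ^ 2 ∂P)
      = β * Real.sqrt γsq / Real.sqrt (β ^ 2 * γsq + σsq) :=
  stmt3_general (m0 := m0) P X Z ε Y β θ hXm hZm hX2 hZ2 hε2 hmodel hε σsq γsq hσ hγ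
end

section
/- Let 𝒳, 𝒴, 𝒵 be finite nonempty sets and let p be a probability mass function on 𝒳 × 𝒴 × 𝒵 with p(x,y,z) > 0 for all (x,y,z). Define p₀(x,y,z) = p(y|x,z)·p_X(x)·p_Z(z), where p_X, p_Z are the marginals of p and p(y|x,z) = p(x,y,z)/p_{XZ}(x,z). Then p₀ is a probability mass function under which X and Z are independent, and for every probability mass function q on 𝒳 × 𝒴 × 𝒵 with q(x,y,z) > 0 everywhere under which X and Z are independent (i.e. q_{XZ}(x,z) = q_X(x)·q_Z(z) for all x,z), the Kullback–Leibler divergence satisfies KL(p ‖ p₀) ≤ KL(p ‖ q), where KL(p ‖ q) = Σ_{x,y,z} p(x,y,z) log(p(x,y,z)/q(x,y,z)). That is, p₀ is the distribution closest to p in Kullback–Leibler distance subject to making X and Z independent. -/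
/-!
Since `q_{XZ} = q_X q_Z`, the ratio `p₀ / q` factors as
`(p(y|x,z) / q(y|x,z)) · (p_X(x) / q_X(x)) · (p_Z(z) / q_Z(z))`. Averaging its logarithm against
`p` writes `KL(p ‖ q) - KL(p ‖ p₀)` as a sum of three divergences (of the conditionals of `Y`
given `(X, Z)`, of the `X`-marginals and of the `Z`-marginals), each nonnegative by Gibbs'
inequality.
-/

open Finset Real

theorem sum_mul_log_div_nonneg {ι : Type*} (s : Finset ι) {a b : ι → ℝ}
    (ha : ∀ i ∈ s, 0 < a i) (hb : ∀ i ∈ s, 0 < b i)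
    (hab : ∑ i ∈ s, b i ≤ ∑ i ∈ s, a i) :
    0 ≤ ∑ i ∈ s, a i * log (a i / b i) := by
  have hterm : ∀ i ∈ s, a i - b i ≤ a i * log (a i / b i) := fun i hi => by
    have hlog := one_sub_inv_le_log_of_pos (div_pos (ha i hi) (hb i hi))
    calc a i - b i = a i * (1 - (a i / b i)⁻¹) := by field_simp [(ha i hi).ne']
      _ ≤ a i * log (a i / b i) := by gcongr; exact (ha i hi).le
  calc (0 : ℝ) ≤ ∑ i ∈ s, (a i - b i) := by rw [sum_sub_distrib]; linarith
    _ ≤ _ := sum_le_sum hterm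

theorem sum_mul_log_div_sub_sum_mul_log_div {ι : Type*} (s : Finset ι) {a b c : ι → ℝ}
    (ha : ∀ i ∈ s, 0 < a i) (hb : ∀ i ∈ s, 0 < b i) (hc : ∀ i ∈ s, 0 < c i) :
    ∑ i ∈ s, a i * log (a i / b i) - ∑ i ∈ s, a i * log (a i / c i)
      = ∑ i ∈ s, a i * log (c i / b i) := by
  rw [← sum_sub_distrib]
  refine sum_congr rfl fun i hi => ?_
  rw [log_div (ha i hi).ne' (hb i hi).ne', log_div (ha i hi).ne' (hc i hi).ne',
    log_div (hc i hi).ne' (hb i hi).ne']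
  ring

section Marginals

variable {α β γ : Type*}

def margX [Fintype β] [Fintype γ] (f : α × β × γ → ℝ) (x : α) : ℝ := ∑ y, ∑ z, f (x, y, z)

def margZ [Fintype α] [Fintype β] (f : α × β × γ → ℝ) (z : γ) : ℝ := ∑ x, ∑ y, f (x, y, z)

def margXZ [Fintype β] (f : α × β × γ → ℝ) (x : α) (z : γ) : ℝ := ∑ y, f (x, y, z)

def IsIndepXZ [Fintype α] [Fintype β] [Fintype γ] (f : α × β × γ → ℝ) : Prop :=
  ∀ x z, margXZ f x z = margX f x * margZ f z

noncomputable def indepXZ [Fintype α] [Fintype β] [Fintype γ] (p : α × β × γ → ℝ)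
    (u : α × β × γ) : ℝ :=
  p u / margXZ p u.1 u.2.2 * margX p u.1 * margZ p u.2.2

theorem sum_mul_margX [Fintype α] [Fintype β] [Fintype γ] (f : α × β × γ → ℝ) (g : α → ℝ) :
    ∑ u, f u * g u.1 = ∑ x, margX f x * g x := by
  simp [Fintype.sum_prod_type, margX, sum_mul]

theorem sum_mul_margZ [Fintype α] [Fintype β] [Fintype γ] (f : α × β × γ → ℝ) (g : γ → ℝ) :
    ∑ u, f u * g u.2.2 = ∑ z, margZ f z * g z := by
  simp only [Fintype.sum_prod_type, margZ, sum_mul]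
  exact sum_comm_cycle

theorem sum_mul_margXZ [Fintype α] [Fintype β] [Fintype γ] (f : α × β × γ → ℝ)
    (g : α → γ → ℝ) :
    ∑ u, f u * g u.1 u.2.2 = ∑ x, ∑ z, margXZ f x z * g x z := by
  simp only [Fintype.sum_prod_type, margXZ, sum_mul]
  exact sum_congr rfl fun _ _ => sum_comm

theorem sum_margX [Fintype α] [Fintype β] [Fintype γ] (f : α × β × γ → ℝ) :
    ∑ x, margX f x = ∑ u, f u := by
  simpa using (sum_mul_margX f fun _ => 1).symm

theorem sum_margZ [Fintype α] [Fintype β] [Fintype γ] (f : α × β × γ → ℝ) :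
    ∑ z, margZ f z = ∑ u, f u := by
  simpa using (sum_mul_margZ f fun _ => 1).symm

theorem sum_margXZ [Fintype α] [Fintype β] [Fintype γ] (f : α × β × γ → ℝ) :
    ∑ x, ∑ z, margXZ f x z = ∑ u, f u := by
  simpa using (sum_mul_margXZ f fun _ _ => 1).symm

theorem margX_pos [Fintype β] [Fintype γ] [Nonempty β] [Nonempty γ] {p : α × β × γ → ℝ}
    (hp : ∀ u, 0 < p u) (x : α) : 0 < margX p x :=
  sum_pos (fun _ _ => sum_pos (fun _ _ => hp _) univ_nonempty) univ_nonempty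

theorem margZ_pos [Fintype α] [Fintype β] [Nonempty α] [Nonempty β] {p : α × β × γ → ℝ}
    (hp : ∀ u, 0 < p u) (z : γ) : 0 < margZ p z :=
  sum_pos (fun _ _ => sum_pos (fun _ _ => hp _) univ_nonempty) univ_nonempty

theorem margXZ_pos [Fintype β] [Nonempty β] {p : α × β × γ → ℝ} (hp : ∀ u, 0 < p u)
    (x : α) (z : γ) : 0 < margXZ p x z :=
  sum_pos (fun _ _ => hp _) univ_nonempty

end Marginals

section IndepXZ

variable {α β γ : Type*} [Fintype α] [Fintype β] [Fintype γ] {p : α × β × γ → ℝ}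

theorem indepXZ_pos [Nonempty α] [Nonempty β] [Nonempty γ] (hp : ∀ u, 0 < p u)
    (u : α × β × γ) : 0 < indepXZ p u :=
  mul_pos (mul_pos (div_pos (hp u) (margXZ_pos hp _ _)) (margX_pos hp _)) (margZ_pos hp _)

theorem margXZ_indepXZ [Nonempty β] (hp : ∀ u, 0 < p u) (x : α) (z : γ) :
    margXZ (indepXZ p) x z = margX p x * margZ p z := by
  simp only [margXZ, indepXZ, ← sum_mul, ← sum_div]
  rw [← margXZ, div_self (margXZ_pos hp x z).ne', one_mul]

theorem margX_indepXZ [Nonempty β] (hp : ∀ u, 0 < p u) (hsum : ∑ u, p u = 1) (x : α) :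
    margX (indepXZ p) x = margX p x := by
  calc margX (indepXZ p) x = ∑ z, margXZ (indepXZ p) x z := sum_comm
    _ = ∑ z, margX p x * margZ p z := by simp only [margXZ_indepXZ hp]
    _ = margX p x := by rw [← mul_sum, sum_margZ, hsum, mul_one]

theorem margZ_indepXZ [Nonempty β] (hp : ∀ u, 0 < p u) (hsum : ∑ u, p u = 1) (z : γ) :
    margZ (indepXZ p) z = margZ p z := by
  calc margZ (indepXZ p) z = ∑ x, margXZ (indepXZ p) x z := rfl
    _ = ∑ x, margX p x * margZ p z := by simp only [margXZ_indepXZ hp]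
    _ = margZ p z := by rw [← sum_mul, sum_margX, hsum, one_mul]

theorem isIndepXZ_indepXZ [Nonempty β] (hp : ∀ u, 0 < p u) (hsum : ∑ u, p u = 1) :
    IsIndepXZ (indepXZ p) := fun x z => by
  rw [margXZ_indepXZ hp, margX_indepXZ hp hsum, margZ_indepXZ hp hsum]

theorem sum_indepXZ [Nonempty β] (hp : ∀ u, 0 < p u) (hsum : ∑ u, p u = 1) :
    ∑ u, indepXZ p u = 1 := by
  rw [← sum_margX]
  simp only [margX_indepXZ hp hsum, sum_margX, hsum]

-- The first summand is `log (p(y|x,z) / q(y|x,z))`.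
theorem log_indepXZ_div [Nonempty α] [Nonempty β] [Nonempty γ] {q : α × β × γ → ℝ}
    (hp : ∀ u, 0 < p u) (hq : ∀ u, 0 < q u) (hqXZ : IsIndepXZ q) (u : α × β × γ) :
    log (indepXZ p u / q u)
      = log (p u / (q u * (margXZ p u.1 u.2.2 / margXZ q u.1 u.2.2)))
        + log (margX p u.1 / margX q u.1) + log (margZ p u.2.2 / margZ q u.2.2) := by
  obtain ⟨x, y, z⟩ := u
  dsimp only
  have := hp (x, y, z); have := hq (x, y, z)
  have := margXZ_pos hp x z; have := margX_pos hp x; have := margZ_pos hp z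
  have := margXZ_pos hq x z; have := margX_pos hq x; have := margZ_pos hq z
  rw [← log_mul, ← log_mul, indepXZ, hqXZ]
  · congr 1
    field_simp
  all_goals positivity

theorem sum_mul_log_indepXZ_div_nonneg [Nonempty α] [Nonempty β] [Nonempty γ]
    {q : α × β × γ → ℝ} (hp : ∀ u, 0 < p u) (hq : ∀ u, 0 < q u)
    (hpq : ∑ u, q u ≤ ∑ u, p u) (hqXZ : IsIndepXZ q) :
    0 ≤ ∑ u, p u * log (indepXZ p u / q u) := by
  have hYgivenXZ :
      0 ≤ ∑ u, p u * log (p u / (q u * (margXZ p u.1 u.2.2 / margXZ q u.1 u.2.2))) := by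
    refine sum_mul_log_div_nonneg _ (fun u _ => hp u)
      (fun u _ => mul_pos (hq u) (div_pos (margXZ_pos hp _ _) (margXZ_pos hq _ _))) ?_
    rw [sum_mul_margXZ q fun x z => margXZ p x z / margXZ q x z, ← sum_margXZ p]
    refine le_of_eq (sum_congr rfl fun x _ => sum_congr rfl fun z _ => ?_)
    exact mul_div_cancel₀ _ (margXZ_pos hq x z).ne'
  have hX : 0 ≤ ∑ u, p u * log (margX p u.1 / margX q u.1) := by
    rw [sum_mul_margX p fun x => log (margX p x / margX q x)]
    exact sum_mul_log_div_nonneg _ (fun x _ => margX_pos hp x) (fun x _ => margX_pos hq x)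
      (by rwa [sum_margX, sum_margX])
  have hZ : 0 ≤ ∑ u, p u * log (margZ p u.2.2 / margZ q u.2.2) := by
    rw [sum_mul_margZ p fun z => log (margZ p z / margZ q z)]
    exact sum_mul_log_div_nonneg _ (fun z _ => margZ_pos hp z) (fun z _ => margZ_pos hq z)
      (by rwa [sum_margZ, sum_margZ])
  simp only [log_indepXZ_div hp hq hqXZ, mul_add, sum_add_distrib]
  linarith

end IndepXZ

/-- `p₀(x,y,z) = p(y|x,z)·p_X(x)·p_Z(z)` is a pmf making `X` and `Z` independent,
and it is the KL-closest such distribution to `p`. -/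
theorem stmt4
    {𝒳 𝒴 𝒵 : Type*} [Fintype 𝒳] [Fintype 𝒴] [Fintype 𝒵]
    [Nonempty 𝒳] [Nonempty 𝒴] [Nonempty 𝒵]
    (p : 𝒳 × 𝒴 × 𝒵 → ℝ)
    (hpos : ∀ u, 0 < p u) (hsum : ∑ u, p u = 1)
    (pX : 𝒳 → ℝ) (hpX : ∀ x, pX x = ∑ y, ∑ z, p (x, y, z))
    (pZ : 𝒵 → ℝ) (hpZ : ∀ z, pZ z = ∑ x, ∑ y, p (x, y, z))
    (pXZ : 𝒳 → 𝒵 → ℝ) (hpXZ : ∀ x z, pXZ x z = ∑ y, p (x, y, z))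
    (p0 : 𝒳 × 𝒴 × 𝒵 → ℝ)
    (hp0 : ∀ x y z, p0 (x, y, z) = p (x, y, z) / pXZ x z * pX x * pZ z) :
    -- p₀ is a probability mass function
    ((∀ u, 0 < p0 u) ∧ ∑ u, p0 u = 1) ∧
    -- under p₀, X and Z are independent
    (∀ x z, (∑ y, p0 (x, y, z))
        = (∑ y, ∑ z', p0 (x, y, z')) * (∑ x', ∑ y, p0 (x', y, z))) ∧
    -- p₀ minimizes KL(p‖·) among positive pmfs q making X and Z independent
    (∀ q : 𝒳 × 𝒴 × 𝒵 → ℝ, (∀ u, 0 < q u) → (∑ u, q u = 1) →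
      (∀ x z, (∑ y, q (x, y, z))
          = (∑ y, ∑ z', q (x, y, z')) * (∑ x', ∑ y, q (x', y, z))) →
      (∑ u, p u * Real.log (p u / p0 u)) ≤ ∑ u, p u * Real.log (p u / q u)) := by
  obtain rfl : pX = margX p := funext hpX
  obtain rfl : pZ = margZ p := funext hpZ
  obtain rfl : pXZ = margXZ p := funext₂ hpXZ
  obtain rfl : p0 = indepXZ p := funext fun ⟨x, y, z⟩ => hp0 x y z
  have hp0pos : ∀ u, 0 < indepXZ p u := indepXZ_pos hpos
  refine ⟨⟨hp0pos, sum_indepXZ hpos hsum⟩, isIndepXZ_indepXZ hpos hsum, ?_⟩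
  intro q hq hqsum hqXZ
  have hKL := sum_mul_log_div_sub_sum_mul_log_div univ (fun u _ => hpos u) (fun u _ => hq u)
    (fun u _ => hp0pos u)
  have hgap := sum_mul_log_indepXZ_div_nonneg hpos hq (by rw [hqsum, hsum]) hqXZ
  linarith
end

section
/- Consider the partially linear model Y = βᵀX + f(Z) + ε, where X is a square-integrable random vector in ℝ^g, Z is a random element, β ∈ ℝ^g, f(Z) is a square-integrable real random variable measurable with respect to Z, Y is square-integrable, and E[ε | X, Z] = 0. Let ν(Z) = E[X | Z] and μ(Z) = E[Y | Z], and assume the g×g matrix E[(X − ν(Z))(X − ν(Z))ᵀ] is invertible. Then β = {E[(X − ν(Z))(X − ν(Z))ᵀ]}^{-1} E[(X − ν(Z))(Y − μ(Z))]. -/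
/-!
Conditioning the model on `Z` gives `E[Y | Z] = βᵀν(Z) + f(Z)`, because `E[ε | Z] = 0` by the
tower property. Hence `Y − μ(Z) = βᵀ(X − ν(Z)) + ε`. Each residual `Xᵢ − νᵢ(Z)` is a function of
`(X, Z)`, so it is orthogonal to `ε`; multiplying by it and integrating gives
`E[(X − ν(Z))(Y − μ(Z))] = E[(X − ν(Z))(X − ν(Z))ᵀ] β`, and the matrix is invertible.
-/

open MeasureTheory Finset

section

variable {Ω ι : Type*} [Fintype ι] {m m' m₀ : MeasurableSpace Ω} {μ : Measure Ω}

lemma integral_mul_eq_zero_of_condExp_ae_eq_zero_s7 (hm : m ≤ m₀) [SigmaFinite (μ.trim hm)]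
    {h ε : Ω → ℝ} (hh : StronglyMeasurable[m] h) (hhε : Integrable (h * ε) μ)
    (hε : Integrable ε μ) (hε0 : μ[ε | m] =ᵐ[μ] 0) :
    ∫ ω, h ω * ε ω ∂μ = 0 := by
  have hzero : μ[h * ε | m] =ᵐ[μ] 0 := by
    filter_upwards [condExp_mul_of_stronglyMeasurable_left hh hhε hε, hε0] with ω hω hω0
    simp [hω, hω0]
  calc ∫ ω, h ω * ε ω ∂μ = ∫ ω, μ[h * ε | m] ω ∂μ := (integral_condExp hm).symm
    _ = 0 := by rw [integral_congr_ae hzero, integral_zero']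

lemma condExp_sum_mul (c : ι → ℝ) {X : ι → Ω → ℝ} (hX : ∀ i, Integrable (X i) μ) :
    μ[fun ω => ∑ i, c i * X i ω | m] =ᵐ[μ] fun ω => ∑ i, c i * μ[X i | m] ω := by
  have hsum : (fun ω => ∑ i, c i * X i ω) = ∑ i, c i • X i := by
    ext ω; simp only [Finset.sum_apply, Pi.smul_apply, smul_eq_mul]
  have hterms : ∀ᵐ ω ∂μ, ∀ i, μ[c i • X i | m] ω = c i * μ[X i | m] ω :=
    ae_all_iff.2 fun i => condExp_smul (c i) (X i) m
  rw [hsum]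
  filter_upwards [condExp_finsetSum (s := univ) (fun i _ => (hX i).smul (c i)) m, hterms]
    with ω hω hωi
  simp only [hω, Finset.sum_apply, hωi]

variable [IsFiniteMeasure μ] {X : ι → Ω → ℝ} {F ε Y : Ω → ℝ} {β : ι → ℝ}

lemma condExp_ae_eq_of_partiallyLinear (hmm' : m ≤ m') (hm' : m' ≤ m₀)
    (hY : ∀ ω, Y ω = ∑ i, β i * X i ω + F ω + ε ω) (hX : ∀ i, Integrable (X i) μ)
    (hF : StronglyMeasurable[m] F) (hFi : Integrable F μ) (hε : Integrable ε μ)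
    (hε0 : μ[ε | m'] =ᵐ[μ] 0) :
    μ[Y | m] =ᵐ[μ] fun ω => ∑ i, β i * μ[X i | m] ω + F ω := by
  have hlin : Integrable (fun ω => ∑ i, β i * X i ω) μ :=
    integrable_finsetSum _ fun i _ => (hX i).const_mul (β i)
  have hεm : μ[ε | m] =ᵐ[μ] 0 := calc
    μ[ε | m] =ᵐ[μ] μ[μ[ε | m'] | m] := (condExp_condExp_of_le hmm' hm').symm
    _ =ᵐ[μ] μ[0 | m] := condExp_congr_ae hε0
    _ = 0 := condExp_zero
  have hYsplit : Y = (fun ω => ∑ i, β i * X i ω) + F + ε := funext hY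
  rw [hYsplit]
  filter_upwards [condExp_add (hlin.add hFi) hε m, condExp_add hlin hFi m,
    condExp_sum_mul (m := m) β hX, hεm] with ω h₁ h₂ h₃ h₀
  simp only [h₁, Pi.add_apply, h₂, h₃, condExp_of_stronglyMeasurable (hmm'.trans hm') hF hFi,
    h₀, Pi.zero_apply, add_zero]

lemma integral_residual_mul_residual (hmm' : m ≤ m') (hm' : m' ≤ m₀)
    (hY : ∀ ω, Y ω = ∑ i, β i * X i ω + F ω + ε ω) (hX : ∀ i, MemLp (X i) 2 μ)
    (hXm : ∀ i, StronglyMeasurable[m'] (X i)) (hF : StronglyMeasurable[m] F)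
    (hFi : Integrable F μ) (hε : MemLp ε 2 μ) (hε0 : μ[ε | m'] =ᵐ[μ] 0) (k : ι) :
    ∫ ω, (X k ω - μ[X k | m] ω) * (Y ω - μ[Y | m] ω) ∂μ =
      ∑ j, (∫ ω, (X k ω - μ[X k | m] ω) * (X j ω - μ[X j | m] ω) ∂μ) * β j := by
  set r : ι → Ω → ℝ := fun i ω => X i ω - μ[X i | m] ω with hr
  have hr2 : ∀ i, MemLp (r i) 2 μ := fun i => (hX i).sub ((hX i).condExp one_le_two)
  have hrr : ∀ j, Integrable (fun ω => r k ω * r j ω * β j) μ := fun j =>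
    ((hr2 k).integrable_mul (hr2 j)).mul_const (β j)
  have hrε : Integrable (fun ω => r k ω * ε ω) μ := (hr2 k).integrable_mul hε
  have hres : ∀ᵐ ω ∂μ, r k ω * (Y ω - μ[Y | m] ω) = ∑ j, r k ω * r j ω * β j + r k ω * ε ω := by
    filter_upwards [condExp_ae_eq_of_partiallyLinear hmm' hm' hY
      (fun i => (hX i).integrable one_le_two) hF hFi (hε.integrable one_le_two) hε0] with ω hω
    have hresidual : Y ω - μ[Y | m] ω = ∑ j, β j * r j ω + ε ω := by
      simp only [hω, hY ω, hr, mul_sub, sum_sub_distrib]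
      ring
    rw [hresidual, mul_add, mul_sum]
    exact congrArg (· + _) (sum_congr rfl fun j _ => by ring)
  have horth : ∫ ω, r k ω * ε ω ∂μ = 0 :=
    integral_mul_eq_zero_of_condExp_ae_eq_zero_s7 hm'
      ((hXm k).sub (stronglyMeasurable_condExp.mono hmm')) hrε (hε.integrable one_le_two) hε0
  rw [integral_congr_ae hres, integral_add (integrable_finsetSum _ fun j _ => hrr j) hrε,
    integral_finsetSum _ fun j _ => hrr j, horth, add_zero]
  simp only [integral_mul_const, r]

end

/-- In the partially linear model `Y = βᵀX + f(Z) + ε` with `E[ε | X,Z] = 0` and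
`E[(X−ν(Z))(X−ν(Z))ᵀ]` invertible,
`β = {E[(X−ν(Z))(X−ν(Z))ᵀ]}⁻¹ E[(X−ν(Z))(Y−μ(Z))]`. -/
theorem stmt7
    {Ω : Type*} {m0 : MeasurableSpace Ω} (P : Measure Ω) [IsProbabilityMeasure P]
    {g : ℕ} {𝒵 : Type*} [MeasurableSpace 𝒵]
    (X : Ω → Fin g → ℝ) (Z : Ω → 𝒵) (Y ε : Ω → ℝ)
    (hXm : Measurable X) (hZm : Measurable Z)
    (hX2 : ∀ i, MemLp (fun ω => X ω i) 2 P) (hY2 : MemLp Y 2 P)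
    (f : 𝒵 → ℝ) (hf : Measurable f) (hf2 : MemLp (fun ω => f (Z ω)) 2 P)
    (β : Fin g → ℝ)
    (hmodel : ∀ ω, Y ω = (∑ i, β i * X ω i) + f (Z ω) + ε ω)
    (hε : P[ε | MeasurableSpace.comap (fun ω => (X ω, Z ω)) inferInstance] =ᵐ[P] 0)
    (ν : Fin g → Ω → ℝ)
    (hν : ∀ i, ν i = P[(fun ω => X ω i) | MeasurableSpace.comap Z inferInstance])
    (M : Matrix (Fin g) (Fin g) ℝ)
    (hM : ∀ i j, M i j = ∫ ω, (X ω i - ν i ω) * (X ω j - ν j ω) ∂P)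
    (hMinv : IsUnit M.det) :
    β = M⁻¹.mulVec (fun i => ∫ ω,
        (X ω i - ν i ω) * (Y ω - (P[Y | MeasurableSpace.comap Z inferInstance]) ω) ∂P) := by
  obtain rfl : ν = _ := funext hν
  have hpair := comap_measurable (m := inferInstance) fun ω => (X ω, Z ω)
  have hZ_le : MeasurableSpace.comap Z inferInstance ≤
      MeasurableSpace.comap (fun ω => (X ω, Z ω)) inferInstance :=
    (measurable_snd.comp hpair).comap_le
  have hlin : MemLp (fun ω => ∑ i, β i * X ω i) 2 P :=
    memLp_finsetSum _ fun i _ => (hX2 i).const_mul (β i)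
  have hε2 : MemLp ε 2 P := by
    convert hY2.sub (hlin.add hf2) using 1
    ext ω; simp only [hmodel ω, Pi.sub_apply, Pi.add_apply]; ring
  have hmoment := integral_residual_mul_residual (X := fun i ω => X ω i) hZ_le
    (hXm.prodMk hZm).comap_le hmodel hX2
    (fun i => ((measurable_pi_apply i).comp (measurable_fst.comp hpair)).stronglyMeasurable)
    (hf.comp (comap_measurable Z)).stronglyMeasurable (hf2.integrable one_le_two) hε2 hε
  calc β = M⁻¹.mulVec (M.mulVec β) := by
        rw [Matrix.mulVec_mulVec, Matrix.nonsing_inv_mul M hMinv, Matrix.one_mulVec]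
    _ = _ := by
        congr 1
        ext i
        simp only [hmoment, hM, Matrix.mulVec, dotProduct]
end

section
/- Let X ∈ ℝ^g and Z ∈ ℝ^h be independent square-integrable random vectors with means m_X, m_Z and covariances Σ_X, Σ_Z, and write Z̃ = (1, Zᵀ)ᵀ. Let θ ∈ ℝ^{g(1+h)} and suppose the regression function is μ(x,z) = θᵀ(z̃ ⊗ x) + f(z) where z̃ = (1, zᵀ)ᵀ (the partially linear model with interactions). Define μ₀(Z) = E_{X'}[μ(X', Z)] for X' an independent copy of X (independent of Z), so that μ(X,Z) − μ₀(Z) = θᵀ(Z̃ ⊗ (X − m_X)). Then the decorrelated LOCO parameter satisfies ψ₃ := E[(μ(X,Z) − μ₀(Z))²] = θᵀ Ω θ, where Ω = E[Z̃Z̃ᵀ] ⊗ Σ_X and E[Z̃Z̃ᵀ] is the (1+h)×(1+h) block matrix [[1, m_Zᵀ], [m_Z, Σ_Z + m_Z m_Zᵀ]]. -/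
/-! The difference `μ(X,Z) − μ₀(Z)` is the linear form `θᵀ(Z̃ ⊗ (X − m_X))`, so its second moment
is `θᵀ E[(Z̃ ⊗ (X − m_X))(Z̃ ⊗ (X − m_X))ᵀ] θ`. By independence of `X` and `Z` each entry of that
matrix factors as `E[Z̃_k Z̃_l] · E[(X_i − m_X i)(X_j − m_X j)]`, i.e. the matrix is `E[Z̃Z̃ᵀ] ⊗ Σ_X`. -/

open MeasureTheory ProbabilityTheory Finset

section

variable {Ω : Type*} [MeasurableSpace Ω] {P : Measure Ω}

lemma integral_sq_sum_mul {ι : Type*} [Fintype ι] {W : Ω → ι → ℝ}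
    (hW : ∀ a b, Integrable (fun ω => W ω a * W ω b) P) (θ : ι → ℝ) :
    ∫ ω, (∑ a, θ a * W ω a) ^ 2 ∂P = ∑ a, ∑ b, θ a * (∫ ω, W ω a * W ω b ∂P) * θ b := by
  have expand : ∀ ω, (∑ a, θ a * W ω a) ^ 2 = ∑ a, ∑ b, θ a * θ b * (W ω a * W ω b) := fun ω => by
    rw [sq, sum_mul_sum]
    exact sum_congr rfl fun a _ => sum_congr rfl fun b _ => by ring
  simp_rw [expand]
  rw [integral_finsetSum _ fun a _ => integrable_finsetSum _ fun b _ => (hW a b).const_mul _]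
  refine sum_congr rfl fun a _ => ?_
  rw [integral_finsetSum _ fun b _ => (hW a b).const_mul _]
  exact sum_congr rfl fun b _ => by rw [integral_const_mul]; ring

namespace ProbabilityTheory.IndepFun

variable {ι κ : Type*} {U : Ω → ι → ℝ} {V : Ω → κ → ℝ}

lemma coord_mul (hUV : IndepFun U V P) (i i' : ι) (k k' : κ) :
    IndepFun (fun ω => U ω i * U ω i') (fun ω => V ω k * V ω k') P :=
  hUV.comp (φ := fun u : ι → ℝ => u i * u i') (ψ := fun v : κ → ℝ => v k * v k')
    (by fun_prop) (by fun_prop)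

lemma integrable_kronecker_mul (hUV : IndepFun U V P)
    (hU : ∀ i, MemLp (fun ω => U ω i) 2 P) (hV : ∀ k, MemLp (fun ω => V ω k) 2 P)
    (i i' : ι) (k k' : κ) :
    Integrable (fun ω => (V ω k * U ω i) * (V ω k' * U ω i')) P := by
  simp_rw [mul_mul_mul_comm _ (U _ i), mul_comm (V _ k * V _ k')]
  exact (hUV.coord_mul i i' k k').integrable_mul
    ((hU i).integrable_mul (hU i')) ((hV k).integrable_mul (hV k'))

lemma integral_kronecker_mul (hUV : IndepFun U V P)
    (hU : ∀ i, MemLp (fun ω => U ω i) 2 P) (hV : ∀ k, MemLp (fun ω => V ω k) 2 P)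
    (i i' : ι) (k k' : κ) :
    ∫ ω, (V ω k * U ω i) * (V ω k' * U ω i') ∂P
      = (∫ ω, V ω k * V ω k' ∂P) * ∫ ω, U ω i * U ω i' ∂P := by
  simp_rw [mul_mul_mul_comm _ (U _ i), mul_comm (V _ k * V _ k')]
  rw [(hUV.coord_mul i i' k k').integral_fun_mul_eq_mul_integral
    ((hU i).integrable_mul (hU i')).aestronglyMeasurable
    ((hV k).integrable_mul (hV k')).aestronglyMeasurable, mul_comm]

end ProbabilityTheory.IndepFun

lemma integral_vecCons_one_mul_vecCons_one [IsProbabilityMeasure P] {h : ℕ} {Z : Ω → Fin h → ℝ}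
    (hZ2 : ∀ k, MemLp (fun ω => Z ω k) 2 P)
    (mZ : Fin h → ℝ) (hmZ : ∀ k, mZ k = ∫ ω, Z ω k ∂P)
    (SigZ : Matrix (Fin h) (Fin h) ℝ)
    (hSigZ : ∀ k l, SigZ k l = ∫ ω, (Z ω k - mZ k) * (Z ω l - mZ l) ∂P)
    (B : Matrix (Fin (h + 1)) (Fin (h + 1)) ℝ)
    (hB00 : B 0 0 = 1)
    (hB0r : ∀ l : Fin h, B 0 l.succ = mZ l)
    (hBr0 : ∀ k : Fin h, B k.succ 0 = mZ k)
    (hBrr : ∀ k l : Fin h, B k.succ l.succ = SigZ k l + mZ k * mZ l) (k l : Fin (h + 1)) :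
    ∫ ω, Matrix.vecCons 1 (Z ω) k * Matrix.vecCons 1 (Z ω) l ∂P = B k l := by
  induction k using Fin.cases with
  | zero => induction l using Fin.cases with
    | zero => simp [hB00]
    | succ l => simp [hB0r, hmZ]
  | succ k => induction l using Fin.cases with
    | zero => simp [hBr0, hmZ]
    | succ l =>
      have hcov : SigZ k l = cov[fun ω => Z ω k, fun ω => Z ω l; P] := by
        rw [hSigZ, covariance, ← hmZ, ← hmZ]
      rw [hBrr, hcov, covariance_eq_sub (hZ2 k) (hZ2 l), ← hmZ, ← hmZ]
      simp

end

theorem stmt9_general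
    {Ω : Type*} [MeasurableSpace Ω] (P : Measure Ω) [IsProbabilityMeasure P]
    {g h : ℕ}
    (X : Ω → Fin g → ℝ) (Z : Ω → Fin h → ℝ)
    (hindep : IndepFun X Z P)
    (hX2 : ∀ i, MemLp (fun ω => X ω i) 2 P)
    (hZ2 : ∀ k, MemLp (fun ω => Z ω k) 2 P)
    (mX : Fin g → ℝ)
    (mZ : Fin h → ℝ) (hmZ : ∀ k, mZ k = ∫ ω, Z ω k ∂P)
    (SigX : Matrix (Fin g) (Fin g) ℝ)
    (hSigX : ∀ i j, SigX i j = ∫ ω, (X ω i - mX i) * (X ω j - mX j) ∂P)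
    (SigZ : Matrix (Fin h) (Fin h) ℝ)
    (hSigZ : ∀ k l, SigZ k l = ∫ ω, (Z ω k - mZ k) * (Z ω l - mZ l) ∂P)
    (θ : Fin (h + 1) × Fin g → ℝ)
    (f : (Fin h → ℝ) → ℝ)
    (μ : (Fin g → ℝ) → (Fin h → ℝ) → ℝ)
    (hμ : ∀ x z, μ x z
        = (∑ a : Fin (h + 1) × Fin g, θ a * (Matrix.vecCons (1 : ℝ) z a.1 * x a.2)) + f z)
    (μ0 : (Fin h → ℝ) → ℝ)
    (hμ0 : ∀ z, μ0 z
        = (∑ a : Fin (h + 1) × Fin g, θ a * (Matrix.vecCons (1 : ℝ) z a.1 * mX a.2)) + f z)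
    -- `B = E[Z̃Z̃ᵀ]`, given in block form `[[1, m_Zᵀ],[m_Z, Σ_Z + m_Z m_Zᵀ]]`
    (B : Matrix (Fin (h + 1)) (Fin (h + 1)) ℝ)
    (hB00 : B 0 0 = 1)
    (hB0r : ∀ l : Fin h, B 0 l.succ = mZ l)
    (hBr0 : ∀ k : Fin h, B k.succ 0 = mZ k)
    (hBrr : ∀ k l : Fin h, B k.succ l.succ = SigZ k l + mZ k * mZ l)
    -- `Ωmat = B ⊗ Σ_X`
    (Ωmat : Matrix (Fin (h + 1) × Fin g) (Fin (h + 1) × Fin g) ℝ)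
    (hΩ : ∀ a b : Fin (h + 1) × Fin g, Ωmat a b = B a.1 b.1 * SigX a.2 b.2) :
    (∫ ω, (μ (X ω) (Z ω) - μ0 (Z ω)) ^ 2 ∂P)
      = ∑ a, ∑ b, θ a * Ωmat a b * θ b := by
  set Xc : Ω → Fin g → ℝ := fun ω i => X ω i - mX i
  set Zt : Ω → Fin (h + 1) → ℝ := fun ω => Matrix.vecCons 1 (Z ω)
  have hXc : ∀ i, MemLp (fun ω => Xc ω i) 2 P := fun i => (hX2 i).sub (memLp_const _)
  have hZt : ∀ k, MemLp (fun ω => Zt ω k) 2 P :=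
    Fin.cases (by simpa [Zt] using memLp_const 1) (by simpa [Zt] using hZ2)
  have hind : IndepFun Xc Zt P :=
    hindep.comp (φ := fun (x : Fin g → ℝ) i => x i - mX i) (ψ := Matrix.vecCons 1) (by fun_prop)
      (measurable_pi_iff.mpr (Fin.cases measurable_const measurable_pi_apply))
  have hdiff : ∀ ω, μ (X ω) (Z ω) - μ0 (Z ω) = ∑ a, θ a * (Zt ω a.1 * Xc ω a.2) := fun ω => by
    rw [hμ, hμ0, add_sub_add_right_eq_sub, ← sum_sub_distrib]
    exact sum_congr rfl fun a _ => by ring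
  simp_rw [hdiff]
  rw [integral_sq_sum_mul fun a b => hind.integrable_kronecker_mul hXc hZt a.2 b.2 a.1 b.1]
  refine sum_congr rfl fun a _ => sum_congr rfl fun b _ => ?_
  rw [hind.integral_kronecker_mul hXc hZt, hΩ, hSigX,
    integral_vecCons_one_mul_vecCons_one hZ2 mZ hmZ SigZ hSigZ B hB00 hB0r hBr0 hBrr]

/-- In the partially linear model with interactions `μ(x,z) = θᵀ(z̃ ⊗ x) + f(z)`,
with `X ⟂ Z`, the decorrelated LOCO parameter is `ψ₃ = E[(μ(X,Z) − μ₀(Z))²] = θᵀΩθ`,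
where `Ω = E[Z̃Z̃ᵀ] ⊗ Σ_X` and `E[Z̃Z̃ᵀ] = [[1, m_Zᵀ],[m_Z, Σ_Z + m_Z m_Zᵀ]]`. -/
theorem stmt9
    {Ω : Type*} [MeasurableSpace Ω] (P : Measure Ω) [IsProbabilityMeasure P]
    {g h : ℕ}
    (X : Ω → Fin g → ℝ) (Z : Ω → Fin h → ℝ)
    (hindep : IndepFun X Z P)
    (hX2 : ∀ i, MemLp (fun ω => X ω i) 2 P)
    (hZ2 : ∀ k, MemLp (fun ω => Z ω k) 2 P)
    (mX : Fin g → ℝ) (hmX : ∀ i, mX i = ∫ ω, X ω i ∂P)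
    (mZ : Fin h → ℝ) (hmZ : ∀ k, mZ k = ∫ ω, Z ω k ∂P)
    (SigX : Matrix (Fin g) (Fin g) ℝ)
    (hSigX : ∀ i j, SigX i j = ∫ ω, (X ω i - mX i) * (X ω j - mX j) ∂P)
    (SigZ : Matrix (Fin h) (Fin h) ℝ)
    (hSigZ : ∀ k l, SigZ k l = ∫ ω, (Z ω k - mZ k) * (Z ω l - mZ l) ∂P)
    (θ : Fin (h + 1) × Fin g → ℝ)
    (f : (Fin h → ℝ) → ℝ)
    (μ : (Fin g → ℝ) → (Fin h → ℝ) → ℝ)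
    (hμ : ∀ x z, μ x z
        = (∑ a : Fin (h + 1) × Fin g, θ a * (Matrix.vecCons (1 : ℝ) z a.1 * x a.2)) + f z)
    (μ0 : (Fin h → ℝ) → ℝ)
    (hμ0 : ∀ z, μ0 z
        = (∑ a : Fin (h + 1) × Fin g, θ a * (Matrix.vecCons (1 : ℝ) z a.1 * mX a.2)) + f z)
    -- `B = E[Z̃Z̃ᵀ]`, given in block form `[[1, m_Zᵀ],[m_Z, Σ_Z + m_Z m_Zᵀ]]`
    (B : Matrix (Fin (h + 1)) (Fin (h + 1)) ℝ)
    (hB00 : B 0 0 = 1)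
    (hB0r : ∀ l : Fin h, B 0 l.succ = mZ l)
    (hBr0 : ∀ k : Fin h, B k.succ 0 = mZ k)
    (hBrr : ∀ k l : Fin h, B k.succ l.succ = SigZ k l + mZ k * mZ l)
    -- `Ωmat = B ⊗ Σ_X`
    (Ωmat : Matrix (Fin (h + 1) × Fin g) (Fin (h + 1) × Fin g) ℝ)
    (hΩ : ∀ a b : Fin (h + 1) × Fin g, Ωmat a b = B a.1 b.1 * SigX a.2 b.2) :
    (∫ ω, (μ (X ω) (Z ω) - μ0 (Z ω)) ^ 2 ∂P)
      = ∑ a, ∑ b, θ a * Ωmat a b * θ b :=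
  stmt9_general P X Z hindep hX2 hZ2 mX mZ hmZ SigX hSigX SigZ hSigZ θ f μ hμ μ0 hμ0 B hB00 hB0r
    hBr0 hBrr Ωmat hΩ
end

section
/- Let (X, Z, Y) be random variables on a probability space with Y square-integrable, and let μ(X,Z) = E[Y | X, Z], μ(Z) = E[Y | Z], and ψ_L = E[(Y − μ(Z))²] − E[(Y − μ(X,Z))²]. Let μ̄_Z be any square-integrable Z-measurable random variable and μ̄_{XZ} any square-integrable (X,Z)-measurable random variable (playing the roles of plugged-in estimates μ̄(Z) and μ̄(X,Z)). Then the population plug-in error satisfies the exact identity E[(Y − μ̄_Z)²] − E[(Y − μ̄_{XZ})²] − ψ_L = E[(μ(Z) − μ̄_Z)²] − E[(μ(X,Z) − μ̄_{XZ})²]. In particular, the bias of the plug-in LOCO functional is second order: it is bounded in absolute value by ‖μ̄_Z − μ(Z)‖² + ‖μ̄_{XZ} − μ(X,Z)‖², where ‖·‖ denotes the L²(P) norm. -/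
/-!
`Y − E[Y | m]` is orthogonal in `L²` to every square-integrable `m`-measurable variable (pull
out what is known, then take expectations), so for such a `g` Pythagoras gives
`E[(Y − g)²] = E[(Y − E[Y | m])²] + E[(E[Y | m] − g)²]`. Applying this with `m = σ(Z)` and
`m = σ(X, Z)` and subtracting yields the identity; the bound follows because both remaining
terms are nonnegative.
-/

open MeasureTheory

section

variable {Ω : Type*} {m m0 : MeasurableSpace Ω} {P : Measure Ω} [IsFiniteMeasure P] {Y g : Ω → ℝ}

theorem integral_mul_sub_condExp_eq_zero (hm : m ≤ m0) (hY : MemLp Y 2 P) (hg : MemLp g 2 P)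
    (hgm : StronglyMeasurable[m] g) :
    ∫ ω, g ω * (Y ω - (P[Y|m]) ω) ∂P = 0 := by
  have hgY : Integrable (fun ω => g ω * Y ω) P := hg.integrable_mul hY
  have hgμ : Integrable (fun ω => g ω * (P[Y|m]) ω) P :=
    hg.integrable_mul (hY.condExp one_le_two)
  have pull_out : ∫ ω, g ω * Y ω ∂P = ∫ ω, g ω * (P[Y|m]) ω ∂P := by
    rw [← integral_condExp hm]
    exact integral_congr_ae
      (condExp_mul_of_stronglyMeasurable_left hgm hgY (hY.integrable one_le_two))
  simp only [mul_sub]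
  rw [integral_sub hgY hgμ]
  exact sub_eq_zero.2 pull_out

theorem integral_sub_sq_eq_integral_sub_condExp_sq_add (hm : m ≤ m0) (hY : MemLp Y 2 P)
    (hg : MemLp g 2 P) (hgm : StronglyMeasurable[m] g) :
    ∫ ω, (Y ω - g ω) ^ 2 ∂P
      = (∫ ω, (Y ω - (P[Y|m]) ω) ^ 2 ∂P) + ∫ ω, ((P[Y|m]) ω - g ω) ^ 2 ∂P := by
  have hμ : MemLp (P[Y|m]) 2 P := hY.condExp one_le_two
  have he : MemLp (fun ω => Y ω - (P[Y|m]) ω) 2 P := hY.sub hμ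
  have hd : MemLp (fun ω => (P[Y|m]) ω - g ω) 2 P := hμ.sub hg
  have cross : ∫ ω, ((P[Y|m]) ω - g ω) * (Y ω - (P[Y|m]) ω) ∂P = 0 :=
    integral_mul_sub_condExp_eq_zero hm hY hd (stronglyMeasurable_condExp.sub hgm)
  have expand : (fun ω => (Y ω - g ω) ^ 2) = fun ω => (Y ω - (P[Y|m]) ω) ^ 2
      + (((P[Y|m]) ω - g ω) ^ 2 + 2 * (((P[Y|m]) ω - g ω) * (Y ω - (P[Y|m]) ω))) := by
    funext ω; ring
  have he2 : Integrable (fun ω => (Y ω - (P[Y|m]) ω) ^ 2) P := he.integrable_sq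
  have hd2 : Integrable (fun ω => ((P[Y|m]) ω - g ω) ^ 2) P := hd.integrable_sq
  have hcross : Integrable (fun ω => 2 * (((P[Y|m]) ω - g ω) * (Y ω - (P[Y|m]) ω))) P :=
    (hd.integrable_mul he).const_mul 2
  have hrest : Integrable (fun ω => ((P[Y|m]) ω - g ω) ^ 2
      + 2 * (((P[Y|m]) ω - g ω) * (Y ω - (P[Y|m]) ω))) P := hd2.add hcross
  rw [expand, integral_add he2 hrest, integral_add hd2 hcross, integral_const_mul, cross,
    mul_zero, add_zero]

end

/-- Exact second-order expansion of the plug-in LOCO functional: for any square-integrable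
`Z`-measurable `μ̄_Z` and `(X,Z)`-measurable `μ̄_{XZ}`,
`E[(Y − μ̄_Z)²] − E[(Y − μ̄_{XZ})²] − ψ_L = E[(μ(Z) − μ̄_Z)²] − E[(μ(X,Z) − μ̄_{XZ})²]`,
so the plug-in bias is bounded by `‖μ̄_Z − μ(Z)‖² + ‖μ̄_{XZ} − μ(X,Z)‖²` (squared `L²(P)` norms,
written as integrals of squares). -/
theorem stmt19
    {Ω : Type*} {m0 : MeasurableSpace Ω} (P : Measure Ω) [IsProbabilityMeasure P]
    {𝒳 𝒵 : Type*} [MeasurableSpace 𝒳] [MeasurableSpace 𝒵]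
    (X : Ω → 𝒳) (Z : Ω → 𝒵) (Y : Ω → ℝ)
    (hX : Measurable X) (hZ : Measurable Z) (hY : MemLp Y 2 P)
    (μbarZ μbarXZ : Ω → ℝ)
    (hbZ2 : MemLp μbarZ 2 P)
    (hbZm : StronglyMeasurable[MeasurableSpace.comap Z inferInstance] μbarZ)
    (hbXZ2 : MemLp μbarXZ 2 P)
    (hbXZm : StronglyMeasurable[MeasurableSpace.comap (fun ω => (X ω, Z ω)) inferInstance]
        μbarXZ)
    (ψL : ℝ)
    (hψ : ψL = (∫ ω, (Y ω - (P[Y | MeasurableSpace.comap Z inferInstance]) ω) ^ 2 ∂P)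
        - ∫ ω, (Y ω
            - (P[Y | MeasurableSpace.comap (fun ω' => (X ω', Z ω')) inferInstance]) ω) ^ 2 ∂P) :
    ((∫ ω, (Y ω - μbarZ ω) ^ 2 ∂P) - (∫ ω, (Y ω - μbarXZ ω) ^ 2 ∂P) - ψL
      = (∫ ω, ((P[Y | MeasurableSpace.comap Z inferInstance]) ω - μbarZ ω) ^ 2 ∂P)
        - ∫ ω, ((P[Y | MeasurableSpace.comap (fun ω' => (X ω', Z ω')) inferInstance]) ω
            - μbarXZ ω) ^ 2 ∂P) ∧
    |(∫ ω, (Y ω - μbarZ ω) ^ 2 ∂P) - (∫ ω, (Y ω - μbarXZ ω) ^ 2 ∂P) - ψL|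
      ≤ (∫ ω, (μbarZ ω - (P[Y | MeasurableSpace.comap Z inferInstance]) ω) ^ 2 ∂P)
        + ∫ ω, (μbarXZ ω
            - (P[Y | MeasurableSpace.comap (fun ω' => (X ω', Z ω')) inferInstance]) ω) ^ 2 ∂P := by
  set μZ := P[Y | MeasurableSpace.comap Z inferInstance]
  set μXZ := P[Y | MeasurableSpace.comap (fun ω' => (X ω', Z ω')) inferInstance]
  have identity : (∫ ω, (Y ω - μbarZ ω) ^ 2 ∂P) - (∫ ω, (Y ω - μbarXZ ω) ^ 2 ∂P) - ψL
      = (∫ ω, (μZ ω - μbarZ ω) ^ 2 ∂P) - ∫ ω, (μXZ ω - μbarXZ ω) ^ 2 ∂P := by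
    rw [hψ, integral_sub_sq_eq_integral_sub_condExp_sq_add hZ.comap_le hY hbZ2 hbZm,
      integral_sub_sq_eq_integral_sub_condExp_sq_add (hX.prodMk hZ).comap_le hY hbXZ2 hbXZm]
    ring
  refine ⟨identity, ?_⟩
  simp only [identity, sub_sq_comm (μbarZ _), sub_sq_comm (μbarXZ _)]
  have hZ_nonneg : 0 ≤ ∫ ω, (μZ ω - μbarZ ω) ^ 2 ∂P := integral_nonneg fun _ => sq_nonneg _
  have hXZ_nonneg : 0 ≤ ∫ ω, (μXZ ω - μbarXZ ω) ^ 2 ∂P := integral_nonneg fun _ => sq_nonneg _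
  exact abs_sub_le_of_nonneg_of_le hZ_nonneg (le_add_of_nonneg_right hXZ_nonneg) hXZ_nonneg
    (le_add_of_nonneg_left hZ_nonneg)
end
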